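/- arXiv:2404.06624 — 3 statements merged into one kernel-verified Lean document; each statement's English description precedes it below -/
import Mathlib

section
/- Feasibility (sufficiency direction of Proposition 1): if for each t the control satisfies ρC̄ ≤ γ_t and c_t ≤ γ_t ≤ Γ_t where Γ_t := ρC̄ + C̄(1-ρ)W − Ω_t and Ω_t := max_{0≤k≤min(t,W-1)} ∑_{i=1}^k (c_{t-i} − ρC̄), and if future consumptions satisfy c_{t'} ≤ ρC̄ for t' > t, then the sliding-window constraint ∑ over any window of W periods containing t of c_i ≤ W·C̄ holds for every window whose last W slots include period t. -/
/-- Ω_t := max_{0 ≤ k ≤ min(t,W-1)} ∑_{i=1}^k (c_{t-i} - ρ·C̄). -/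
noncomputable def Omega (c : ℕ → ℝ) (ρ Cb : ℝ) (W t : ℕ) : ℝ :=
  (Finset.range (min t (W - 1) + 1)).sup'
    (Finset.nonempty_range_iff.mpr (Nat.succ_ne_zero _))
    (fun k => ∑ i ∈ Finset.Icc 1 k, (c (t - i) - ρ * Cb))

/-- Budget Γ_t := ρC̄ + C̄(1-ρ)W - Ω_t. -/
noncomputable def Gamma (c : ℕ → ℝ) (ρ Cb : ℝ) (W t : ℕ) : ℝ :=
  ρ * Cb + Cb * (1 - ρ) * W - Omega c ρ Cb W t

/-!
Split a window containing `t` into its `m ≤ min t k` past slots, slot `t` and its `W - 1 - k`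
future slots. By definition of `Ω_t` the past slots consume at most `Ω_t + m ρC̄`, the future
ones at most `ρC̄` each, and `c_t ≤ Γ_t` absorbs `Ω_t`; what remains is
`ρC̄ (m + 1 + (W - 1 - k)) + C̄ (1 - ρ) W ≤ ρC̄ W + C̄ (1 - ρ) W = W C̄`.
-/

theorem sum_past_le_Omega (c : ℕ → ℝ) (ρ Cb : ℝ) {W t m : ℕ} (hm : m ≤ min t (W - 1)) :
    ∑ i ∈ Finset.Icc 1 m, c (t - i) ≤ Omega c ρ Cb W t + m * (ρ * Cb) := by
  have hΩ : ∑ i ∈ Finset.Icc 1 m, (c (t - i) - ρ * Cb) ≤ Omega c ρ Cb W t :=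
    Finset.le_sup' (fun k => ∑ i ∈ Finset.Icc 1 k, (c (t - i) - ρ * Cb))
      (Finset.mem_range_succ_iff.mpr hm)
  rw [Finset.sum_sub_distrib, Finset.sum_const, Nat.card_Icc, Nat.add_sub_cancel,
    nsmul_eq_mul] at hΩ
  linarith

theorem sum_future_le {c : ℕ → ℝ} {a : ℝ} {t : ℕ} (hfut : ∀ t', t < t' → c t' ≤ a) (n : ℕ) :
    ∑ i ∈ Finset.Icc 1 n, c (t + i) ≤ n * a := by
  calc ∑ i ∈ Finset.Icc 1 n, c (t + i)
      ≤ ∑ _i ∈ Finset.Icc 1 n, a :=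
        Finset.sum_le_sum fun i hi => hfut _ (by linarith [(Finset.mem_Icc.mp hi).1])
    _ = n * a := by rw [Finset.sum_const, Nat.card_Icc, Nat.add_sub_cancel, nsmul_eq_mul]

theorem stmt_9_general (c : ℕ → ℝ)
    (ρ Cb : ℝ) (hρ : ρ ∈ Set.Icc (0:ℝ) 1) (hCb : 0 < Cb)
    (W : ℕ) (hW : 1 ≤ W) (t : ℕ)
    (hct : c t ≤ Gamma c ρ Cb W t)
    (hfut : ∀ t', t < t' → c t' ≤ ρ * Cb) :
    ∀ k : ℕ, k ≤ W - 1 →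
      (∑ i ∈ Finset.Icc 1 (min t k), c (t - i)) + c t +
        (∑ i ∈ Finset.Icc 1 (W - 1 - k), c (t + i)) ≤ W * Cb := by
  intro k hk
  have hpast := sum_past_le_Omega c ρ Cb (min_le_min le_rfl hk : min t k ≤ min t (W - 1))
  have hfuture := sum_future_le hfut (W - 1 - k)
  have hslots : ((min t k : ℕ) : ℝ) + 1 + ((W - 1 - k : ℕ) : ℝ) ≤ W := by
    exact_mod_cast (by omega : min t k + 1 + (W - 1 - k) ≤ W)
  have hρCb : 0 ≤ ρ * Cb := mul_nonneg hρ.1 hCb.le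
  have hwindow := mul_le_mul_of_nonneg_left hslots hρCb
  unfold Gamma at hct
  linarith

theorem stmt_9 (c : ℕ → ℝ) (hc : ∀ s, 0 ≤ c s)
    (ρ Cb : ℝ) (hρ : ρ ∈ Set.Icc (0:ℝ) 1) (hCb : 0 < Cb)
    (W : ℕ) (hW : 1 ≤ W) (t : ℕ)
    (hct : c t ≤ Gamma c ρ Cb W t)
    (hfut : ∀ t', t < t' → c t' ≤ ρ * Cb) :
    ∀ k : ℕ, k ≤ W - 1 →
      (∑ i ∈ Finset.Icc 1 (min t k), c (t - i)) + c t +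
        (∑ i ∈ Finset.Icc 1 (W - 1 - k), c (t + i)) ≤ W * Cb :=
  stmt_9_general c ρ Cb hρ hCb W hW t hct hfut
end

section
/- Necessity direction of Proposition 1: if c_t > Γ_t := ρC̄ + C̄(1-ρ)W − Ω_t, and all future consumptions equal ρC̄ (the minimum allowed), then at least one sliding-window constraint containing period t is violated, i.e., there exists k with 0 ≤ k ≤ min(t, W-1) such that ∑_{i=1}^{k} c_{t-i} + c_t + (W-1-k)ρC̄ > W·C̄. -/
/-!
Take a window length `k` at which the maximum `Ω_t` is attained. With the future periods at the
floor `ρC̄`, the load of that window is `Ω_t + kρC̄ + c_t + (W-1-k)ρC̄ = Ω_t + c_t + (W-1)ρC̄`,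
and `c_t > Γ_t` turns this into `> ρC̄ + C̄(1-ρ)W + (W-1)ρC̄ = WC̄`.
-/

theorem exists_le_omega_eq (c : ℕ → ℝ) (ρ Cb : ℝ) (W t : ℕ) :
    ∃ k ≤ min t (W - 1),
      Omega c ρ Cb W t = ∑ i ∈ Finset.Icc 1 k, c (t - i) - k * (ρ * Cb) := by
  obtain ⟨k, hk, hmax⟩ := Finset.exists_mem_eq_sup' _
    (fun k => ∑ i ∈ Finset.Icc 1 k, (c (t - i) - ρ * Cb))
  refine ⟨k, Nat.lt_succ_iff.mp (Finset.mem_range.mp hk), ?_⟩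
  rw [Omega, hmax, Finset.sum_sub_distrib, Finset.sum_const, Nat.card_Icc, nsmul_eq_mul,
    Nat.add_sub_cancel]

theorem Nat.cast_sub_one_sub {W k : ℕ} (hW : 1 ≤ W) (hk : k ≤ W - 1) :
    ((W - 1 - k : ℕ) : ℝ) = W - 1 - k := by
  rw [Nat.cast_sub hk, Nat.cast_sub hW, Nat.cast_one]

theorem stmt_10_general (c : ℕ → ℝ)
    (ρ Cb : ℝ)
    (W : ℕ) (hW : 1 ≤ W) (t : ℕ)
    (hgt : Gamma c ρ Cb W t < c t) :
    ∃ k : ℕ, k ≤ min t (W - 1) ∧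
      W * Cb < (∑ i ∈ Finset.Icc 1 k, c (t - i)) + c t + (W - 1 - k : ℕ) * (ρ * Cb) := by
  obtain ⟨k, hk, hΩ⟩ := exists_le_omega_eq c ρ Cb W t
  refine ⟨k, hk, ?_⟩
  rw [Nat.cast_sub_one_sub hW (hk.trans (min_le_right _ _))]
  rw [Gamma, hΩ] at hgt
  linarith

theorem stmt_10 (c : ℕ → ℝ) (hc : ∀ s, 0 ≤ c s)
    (ρ Cb : ℝ) (hρ : ρ ∈ Set.Icc (0:ℝ) 1) (hCb : 0 < Cb)
    (W : ℕ) (hW : 1 ≤ W) (t : ℕ)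
    (hgt : Gamma c ρ Cb W t < c t)
    (hfut : ∀ i : ℕ, 1 ≤ i → c (t + i) = ρ * Cb) :
    ∃ k : ℕ, k ≤ min t (W - 1) ∧
      W * Cb < (∑ i ∈ Finset.Icc 1 k, c (t - i)) + c t + (W - 1 - k : ℕ) * (ρ * Cb) :=
  stmt_10_general c ρ Cb W hW t hgt
end

section
/- If the per-period consumptions satisfy c_t ≤ γ_t for all t and γ_t ≤ Γ_t where Γ_t is the exact budget with guaranteed ratio ρ, and additionally γ_t ≥ ρC̄, then the conservative budget policy γ_t ≤ Γ̃_t also guarantees the sliding-window EMF constraint, since Γ̃_t ≤ Γ_t. -/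
/-- Conservative Ω̃_t := ∑_{i=1}^{min(t,W-1)} max(c_{t-i} - ρ·C̄, 0). -/
noncomputable def OmegaTilde (c : ℕ → ℝ) (ρ Cb : ℝ) (W t : ℕ) : ℝ :=
  ∑ i ∈ Finset.Icc 1 (min t (W - 1)), max (c (t - i) - ρ * Cb) 0

/-- Conservative budget Γ̃_t. -/
noncomputable def GammaTilde (c : ℕ → ℝ) (ρ Cb : ℝ) (W t : ℕ) : ℝ :=
  ρ * Cb + Cb * (1 - ρ) * W - OmegaTilde c ρ Cb W t

/-!
The current period costs at most `Γ̃_t = ρC̄ + (1 - ρ)WC̄ - Ω̃_t`, and each of the at most `W - 1`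
earlier periods `i` of the window costs at most `ρC̄ + max(c_i - ρC̄, 0)`; these excesses add up
to exactly `Ω̃_t`. Summing, the window costs at most `ρC̄ + (1 - ρ)WC̄ + (W - 1)ρC̄ = WC̄`.
-/

open Finset

theorem sum_Icc_window_eq_add_sum_Icc_lags {M : Type*} [AddCommMonoid M] (f : ℕ → M)
    {W : ℕ} (hW : 1 ≤ W) (t : ℕ) :
    ∑ i ∈ Icc (t + 1 - W) t, f i = f t + ∑ j ∈ Icc 1 (min t (W - 1)), f (t - j) := by
  have reflect : ∑ i ∈ Icc (t + 1 - W) t, f i = ∑ j ∈ Icc 0 (min t (W - 1)), f (t - j) := by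
    refine sum_nbij' (t - ·) (t - ·) ?_ ?_ ?_ ?_ ?_ <;> intro i hi <;>
      simp only [mem_Icc] at hi ⊢ <;> first | omega | congr 1; omega
  rw [reflect, ← add_sum_Ioc_eq_sum_Icc (Nat.zero_le _), Nat.sub_zero, ← Icc_add_one_left_eq_Ioc,
    zero_add]

theorem sum_Icc_lags_le_omegaTilde_add (c : ℕ → ℝ) (ρ Cb : ℝ) (W t : ℕ) :
    ∑ j ∈ Icc 1 (min t (W - 1)), c (t - j)
      ≤ OmegaTilde c ρ Cb W t + (min t (W - 1) : ℕ) * (ρ * Cb) := by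
  calc ∑ j ∈ Icc 1 (min t (W - 1)), c (t - j)
      ≤ ∑ j ∈ Icc 1 (min t (W - 1)), (max (c (t - j) - ρ * Cb) 0 + ρ * Cb) :=
        sum_le_sum fun j _ => sub_le_iff_le_add.mp (le_max_left _ _)
    _ = OmegaTilde c ρ Cb W t + min t (W - 1) * (ρ * Cb) := by
        rw [sum_add_distrib, sum_const, Nat.card_Icc, Nat.add_sub_cancel, nsmul_eq_mul, OmegaTilde]

theorem stmt_16_general (c γ : ℕ → ℝ) (hcγ : ∀ t, c t ≤ γ t)
    (ρ Cb : ℝ) (hρ : ρ ∈ Set.Icc (0:ℝ) 1) (hCb : 0 < Cb)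
    (W : ℕ) (hW : 1 ≤ W)
    (hγ : ∀ t, ρ * Cb ≤ γ t ∧ γ t ≤ GammaTilde c ρ Cb W t) :
    ∀ t : ℕ, ∑ i ∈ Finset.Icc (t + 1 - W) t, c i ≤ W * Cb := by
  intro t
  have hρCb : 0 ≤ ρ * Cb := mul_nonneg hρ.1 hCb.le
  have hlags : ((min t (W - 1) : ℕ) : ℝ) ≤ W - 1 := by
    rw [← Nat.cast_pred hW, Nat.cast_le]
    exact min_le_right t (W - 1)
  have hcurrent : c t ≤ GammaTilde c ρ Cb W t := (hcγ t).trans (hγ t).2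
  rw [GammaTilde] at hcurrent
  rw [sum_Icc_window_eq_add_sum_Icc_lags c hW t]
  linarith [sum_Icc_lags_le_omegaTilde_add c ρ Cb W t, mul_le_mul_of_nonneg_right hlags hρCb]

theorem stmt_16 (c γ : ℕ → ℝ) (hc : ∀ t, 0 ≤ c t) (hcγ : ∀ t, c t ≤ γ t)
    (ρ Cb : ℝ) (hρ : ρ ∈ Set.Icc (0:ℝ) 1) (hCb : 0 < Cb)
    (W : ℕ) (hW : 1 ≤ W)
    (hγ : ∀ t, ρ * Cb ≤ γ t ∧ γ t ≤ GammaTilde c ρ Cb W t) :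
    ∀ t : ℕ, ∑ i ∈ Finset.Icc (t + 1 - W) t, c i ≤ W * Cb :=
  stmt_16_general c γ hcγ ρ Cb hρ hCb W hW hγ
end
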